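/- For every α ∈ [0,4) the crease energy satisfies the upper bound C_α ≤ (4 − α) − (4 − α)²/8; in particular C_α → 0 as α → 4⁻. -/

import Mathlib

open Real MeasureTheory Filter Topology
open scoped ENNReal

noncomputable section

/-- The minimal angle `θ_α = arccos (α/4)`. -/
def thetaMin (α : ℝ) : ℝ := Real.arccos (α / 4)

/-- A single summand of the crease (transition) energy. -/
def creaseSummand (α : ℝ) (θ : ℤ → ℝ) (i : ℤ) : ℝ :=
  Real.cos (θ i + θ (i + 1)) - α / 2 * (Real.cos (θ i) + Real.cos (θ (i + 1)))
    + α ^ 2 / 8 + 1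

/-- The (nonnegative-termed) sum over `ℤ`, with values in `[0, ∞]`. -/
def creaseSum (α : ℝ) (θ : ℤ → ℝ) : ℝ≥0∞ :=
  ∑' i : ℤ, ENNReal.ofReal (creaseSummand α θ i)

/-- The crease energy `C_α`: infimum over `N ∈ ℕ` and maps `θ : ℤ → [−π/2, π/2]` with
`θ^i = sign i · θ_α` for `|i| ≥ N` of the sum of the transition energy. -/
def crease (α : ℝ) : ℝ≥0∞ :=
  sInf { c : ℝ≥0∞ | ∃ (N : ℕ) (θ : ℤ → ℝ),
    (∀ i, θ i ∈ Set.Icc (-(π / 2)) (π / 2)) ∧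
    (∀ i : ℤ, (N : ℤ) ≤ |i| → θ i = (i.sign : ℝ) * thetaMin α) ∧
    c = creaseSum α θ }

/-!
The sharp crease `θ^i = sign(i) · θ_α` (with `N = 0`) is admissible. Since `cos θ_α = α/4` and
`cos 2θ_α = α²/8 - 1`, every summand away from the crease vanishes, and the two summands at
`i = -1, 0` each equal `1 - α/4`. Hence `C_α ≤ 2 - α/2`, which is below
`(4 - α) - (4 - α)²/8` by `(4 - α) α / 8 ≥ 0`, and tends to `0` as `α → 4`.
-/

def sharpCrease (α : ℝ) (i : ℤ) : ℝ := i.sign * thetaMin α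

section SharpCrease

variable {α : ℝ}

lemma cos_thetaMin (hα : |α| ≤ 4) : cos (thetaMin α) = α / 4 := by
  rw [abs_le] at hα
  exact cos_arccos (by linarith) (by linarith)

lemma cos_two_mul_thetaMin (hα : |α| ≤ 4) : cos (2 * thetaMin α) = α ^ 2 / 8 - 1 := by
  rw [cos_two_mul, cos_thetaMin hα]
  ring

lemma creaseSummand_sharpCrease (hα : |α| ≤ 4) (i : ℤ) :
    creaseSummand α (sharpCrease α) i = if i = -1 ∨ i = 0 then 1 - α / 4 else 0 := by
  have hcos := cos_thetaMin hα
  have hcos2 := cos_two_mul_thetaMin hα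
  simp only [creaseSummand, sharpCrease]
  rcases lt_trichotomy i (-1) with hi | rfl | hi
  · rw [Int.sign_eq_neg_one_of_neg (by omega), Int.sign_eq_neg_one_of_neg (by omega),
      if_neg (by omega)]
    simp only [Int.cast_neg, Int.cast_one, neg_one_mul]
    rw [← neg_add, cos_neg, cos_neg, ← two_mul, hcos, hcos2]
    ring
  · norm_num [hcos]
    ring
  · obtain rfl | hi := (Int.add_one_le_iff.mpr hi).eq_or_lt
    · norm_num [hcos]
      ring
    · rw [Int.sign_eq_one_of_pos (by omega), Int.sign_eq_one_of_pos (by omega),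
        if_neg (by omega)]
      simp only [Int.cast_one, one_mul, ← two_mul, hcos, hcos2]
      ring

lemma creaseSum_sharpCrease (hα : |α| ≤ 4) :
    creaseSum α (sharpCrease α) = ENNReal.ofReal (2 - α / 2) := by
  have h4 : α ≤ 4 := (abs_le.mp hα).2
  have hvanish : ∀ i ∉ ({-1, 0} : Finset ℤ),
      ENNReal.ofReal (creaseSummand α (sharpCrease α) i) = 0 := by
    intro i hi
    simp only [Finset.mem_insert, Finset.mem_singleton] at hi
    simp [creaseSummand_sharpCrease hα, hi]
  rw [creaseSum, tsum_eq_sum hvanish, Finset.sum_pair (by decide),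
    creaseSummand_sharpCrease hα, creaseSummand_sharpCrease hα, if_pos (Or.inl rfl),
    if_pos (Or.inr rfl), ← ENNReal.ofReal_add (by linarith) (by linarith)]
  ring_nf

lemma sharpCrease_mem_Icc (hα : α ∈ Set.Icc 0 4) (i : ℤ) :
    sharpCrease α i ∈ Set.Icc (-(π / 2)) (π / 2) := by
  have hθ : thetaMin α ≤ π / 2 := arccos_le_pi_div_two.mpr (by linarith [hα.1])
  have hsign : |(i.sign : ℝ)| ≤ 1 := by
    rcases Int.sign_trichotomy i with h | h | h <;> simp [h]
  have hθ₀ : 0 ≤ thetaMin α := arccos_nonneg _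
  rw [Set.mem_Icc, ← abs_le, sharpCrease, abs_mul, abs_of_nonneg hθ₀]
  nlinarith [abs_nonneg (i.sign : ℝ)]

end SharpCrease

lemma crease_le_two_sub_half {α : ℝ} (hα : α ∈ Set.Icc 0 4) :
    crease α ≤ ENNReal.ofReal (2 - α / 2) := by
  have habs : |α| ≤ 4 := abs_le.mpr ⟨by linarith [hα.1], hα.2⟩
  exact sInf_le ⟨0, sharpCrease α, sharpCrease_mem_Icc hα, fun _ _ ↦ rfl,
    (creaseSum_sharpCrease habs).symm⟩

/-- for every `α ∈ [0,4)`, `C_α ≤ (4 − α) − (4 − α)²/8`; in particular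
`C_α → 0` as `α → 4⁻`. -/
theorem crease_energy_upper_bound :
    (∀ α ∈ Set.Ico (0 : ℝ) 4,
      crease α ≤ ENNReal.ofReal ((4 - α) - (4 - α) ^ 2 / 8)) ∧
    Filter.Tendsto crease (𝓝[<] (4 : ℝ)) (𝓝 (0 : ℝ≥0∞)) := by
  refine ⟨fun α hα ↦ ?_, ?_⟩
  · refine (crease_le_two_sub_half (Set.Ico_subset_Icc_self hα)).trans
      (ENNReal.ofReal_le_ofReal ?_)
    nlinarith [hα.1, hα.2]
  · have hbound : Tendsto (fun α : ℝ ↦ ENNReal.ofReal (2 - α / 2)) (𝓝[<] 4) (𝓝 0) := by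
      have hlim : Tendsto (fun α : ℝ ↦ 2 - α / 2) (𝓝 4) (𝓝 (2 - 4 / 2)) :=
        (continuous_const.sub (continuous_id.div_const 2)).tendsto 4
      norm_num at hlim
      simpa using (ENNReal.tendsto_ofReal hlim).mono_left nhdsWithin_le_nhds
    refine tendsto_nhds_bot_mono hbound ?_
    filter_upwards [Ioo_mem_nhdsLT (show (0 : ℝ) < 4 by norm_num)] with α hα
    exact crease_le_two_sub_half (Set.Ioo_subset_Icc_self hα)
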